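/- Let ẑ, k, x̂ : ℝ → ℝ³ and ω : ℝ → ℝ³ be such that at a time t: ‖ẑ(t)‖ = 1, ẑ(t) × k(t) ≠ 0, x̂(s) = (ẑ(s) × k(s))/‖ẑ(s) × k(s)‖ for all s, k is differentiable at t with derivative k̇(t), x̂ is differentiable at t, and the derivative of x̂ at t equals ω(t) × x̂(t). Define ŷ(t) = ẑ(t) × x̂(t). Then the boresight component of the angular velocity satisfies ⟨ω(t), ẑ(t)⟩ = (⟨ω(t), ŷ(t)⟩·⟨k(t), ẑ(t)⟩ − ⟨k̇(t), x̂(t)⟩)/⟨k(t), ŷ(t)⟩. -/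

import Mathlib

/-!
Since `x̂ = (ẑ × k)/‖ẑ × k‖` is orthogonal to `k` at all times, differentiating `⟨k, x̂⟩ = 0` gives
`⟨k̇, x̂⟩ + ⟨k, ω × x̂⟩ = 0`. Expanding `ω × x̂` in the orthogonal frame `(x̂, ŷ, ẑ)` turns the second
term into `k_y ω_z − k_z ω_y`, and `k_y = −‖ẑ × k‖` does not vanish, so one can solve for `ω_z`.
-/

open scoped RealInnerProductSpace

noncomputable def cross3 (a b : EuclideanSpace ℝ (Fin 3)) : EuclideanSpace ℝ (Fin 3) :=
  (EuclideanSpace.equiv (Fin 3) ℝ).symm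
    (crossProduct ((EuclideanSpace.equiv (Fin 3) ℝ) a) ((EuclideanSpace.equiv (Fin 3) ℝ) b))

open Matrix Topology

lemma EuclideanSpace.real_inner_eq_dotProduct {ι : Type*} [Fintype ι] (a b : EuclideanSpace ℝ ι) :
    ⟪a, b⟫ = EuclideanSpace.equiv ι ℝ a ⬝ᵥ EuclideanSpace.equiv ι ℝ b := by
  rw [EuclideanSpace.inner_eq_star_dotProduct, star_trivial, dotProduct_comm]
  rfl

lemma equiv_cross3 (a b : EuclideanSpace ℝ (Fin 3)) :
    EuclideanSpace.equiv (Fin 3) ℝ (cross3 a b) =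
      EuclideanSpace.equiv (Fin 3) ℝ a ⨯₃ EuclideanSpace.equiv (Fin 3) ℝ b :=
  rfl

lemma inner_cross3_self_left (a b : EuclideanSpace ℝ (Fin 3)) : ⟪a, cross3 a b⟫ = 0 := by
  rw [EuclideanSpace.real_inner_eq_dotProduct, equiv_cross3, dot_self_cross]

lemma inner_cross3_self_right (a b : EuclideanSpace ℝ (Fin 3)) : ⟪b, cross3 a b⟫ = 0 := by
  rw [EuclideanSpace.real_inner_eq_dotProduct, equiv_cross3, dot_cross_self]

lemma inner_cross3_rotate (u v w : EuclideanSpace ℝ (Fin 3)) :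
    ⟪u, cross3 v w⟫ = ⟪v, cross3 w u⟫ := by
  simp only [EuclideanSpace.real_inner_eq_dotProduct, equiv_cross3]
  exact triple_product_permutation _ _ _

lemma cross3_anticomm (a b : EuclideanSpace ℝ (Fin 3)) : cross3 b a = -cross3 a b := by
  apply (EuclideanSpace.equiv (Fin 3) ℝ).injective
  rw [map_neg, equiv_cross3, equiv_cross3, cross_anticomm]

lemma cross3_smul_right (c : ℝ) (a b : EuclideanSpace ℝ (Fin 3)) :
    cross3 a (c • b) = c • cross3 a b := by
  apply (EuclideanSpace.equiv (Fin 3) ℝ).injective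
  rw [map_smul, equiv_cross3, equiv_cross3, map_smul, map_smul]

lemma cross3_cross3 (u v w : EuclideanSpace ℝ (Fin 3)) :
    cross3 u (cross3 v w) = ⟪u, w⟫ • v - ⟪v, u⟫ • w := by
  apply (EuclideanSpace.equiv (Fin 3) ℝ).injective
  rw [equiv_cross3, equiv_cross3, cross_cross_eq_smul_sub_smul', map_sub, map_smul, map_smul,
    EuclideanSpace.real_inner_eq_dotProduct, EuclideanSpace.real_inner_eq_dotProduct]

lemma cross3_eq_of_inner_self_eq_one_of_inner_eq_zero {z x : EuclideanSpace ℝ (Fin 3)}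
    (hz : ⟪z, z⟫ = 1) (hzx : ⟪z, x⟫ = 0) (w : EuclideanSpace ℝ (Fin 3)) :
    cross3 w x = ⟪w, z⟫ • cross3 z x - ⟪w, cross3 z x⟫ • z := by
  -- For unit `z`, every `v` equals `⟪v, z⟫ • z - z × (z × v)`; take `v = w × x`.
  set v := cross3 w x
  have h1 : cross3 z v = -⟪w, z⟫ • x := by
    rw [cross3_cross3, hzx, zero_smul, zero_sub, real_inner_comm, neg_smul]
  have h2 : ⟪v, z⟫ = -⟪w, cross3 z x⟫ := by
    rw [real_inner_comm, inner_cross3_rotate, cross3_anticomm, inner_neg_right]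
  calc v = ⟪v, z⟫ • z - cross3 z (cross3 z v) := by
          rw [cross3_cross3, hz, one_smul, real_inner_comm z v, sub_sub_cancel]
    _ = _ := by
          rw [h1, h2, cross3_smul_right, neg_smul, neg_smul, sub_neg_eq_add, add_comm,
            sub_eq_add_neg]

lemma inner_cross3_normalized_cross3 (z k : EuclideanSpace ℝ (Fin 3)) :
    ⟪k, cross3 z (‖cross3 z k‖⁻¹ • cross3 z k)⟫ = -‖cross3 z k‖ := by
  rw [inner_cross3_rotate, inner_cross3_rotate, cross3_anticomm z k, inner_neg_right,
    real_inner_smul_left, real_inner_self_eq_norm_sq]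
  rcases eq_or_ne ‖cross3 z k‖ 0 with h | h
  · simp [h]
  · field_simp

theorem HasDerivAt.inner_add_inner_eq_zero {E : Type*} [NormedAddCommGroup E]
    [InnerProductSpace ℝ E] {f g : ℝ → E} {f' g' : E} {t : ℝ} (hf : HasDerivAt f f' t)
    (hg : HasDerivAt g g' t) (h : ∀ᶠ s in 𝓝 t, ⟪f s, g s⟫ = 0) :
    ⟪f', g t⟫ + ⟪f t, g'⟫ = 0 := by
  have := (hf.inner ℝ hg).unique ((hasDerivAt_const t (0 : ℝ)).congr_of_eventuallyEq h)
  linarith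

/-- the boresight component of the angular velocity satisfies
ω_z = (ω_y k_z − k̇_x)/k_y. -/
theorem stmt3 (z k x : ℝ → EuclideanSpace ℝ (Fin 3)) (ω : ℝ → EuclideanSpace ℝ (Fin 3))
    (t : ℝ) (k' : EuclideanSpace ℝ (Fin 3))
    (hz : ‖z t‖ = 1) (hzk : cross3 (z t) (k t) ≠ 0)
    (hx : ∀ s, x s = ‖cross3 (z s) (k s)‖⁻¹ • cross3 (z s) (k s))
    (hk : HasDerivAt k k' t)
    (hxd : HasDerivAt x (cross3 (ω t) (x t)) t)
    (y : EuclideanSpace ℝ (Fin 3)) (hy : y = cross3 (z t) (x t)) :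
    ⟪ω t, z t⟫ = (⟪ω t, y⟫ * ⟪k t, z t⟫ - ⟪k', x t⟫) / ⟪k t, y⟫ := by
  have hzz : ⟪z t, z t⟫ = 1 := by rw [real_inner_self_eq_norm_sq, hz, one_pow]
  have hzx : ⟪z t, x t⟫ = 0 := by
    rw [hx t, real_inner_smul_right, inner_cross3_self_left, mul_zero]
  have hky : ⟪k t, y⟫ ≠ 0 := by
    rw [hy, hx t, inner_cross3_normalized_cross3, neg_ne_zero, norm_ne_zero_iff]
    exact hzk
  have hkx : ∀ s, ⟪k s, x s⟫ = 0 := fun s => by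
    rw [hx s, real_inner_smul_right, inner_cross3_self_right, mul_zero]
  have hderiv := hk.inner_add_inner_eq_zero hxd (.of_forall hkx)
  rw [cross3_eq_of_inner_self_eq_one_of_inner_eq_zero hzz hzx, ← hy, inner_sub_right,
    real_inner_smul_right, real_inner_smul_right] at hderiv
  rw [eq_div_iff hky]
  linear_combination hderiv
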